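/- arXiv:2008.08575 — 3 statements merged into one kernel-verified Lean document; each statement's English description precedes it below -/
import Mathlib

section
/- Let G be a simple graph with minimum degree δ and minimum cut value λ < δ (so λ ≤ δ). Let X' ⊆ V be a set such that every vertex v ∈ X' satisfies |E(v, X')| ≥ 2·deg(v)/5, and let (C, V\C) be a minimum cut with min{|X'∩C|, |X'\C|} ≤ λ/40. Then min{|X'∩C|, |X'\C|} ≤ 2. -/
open Finset

variable {V : Type*} [Fintype V] [DecidableEq V]

/-- Number of ordered adjacencies from `A` to `B`; for disjoint `A B` this is `|E(A,B)|`. -/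
def eBtw (G : SimpleGraph V) [DecidableRel G.Adj] (A B : Finset V) : ℕ :=
  ∑ a ∈ A, (B.filter (G.Adj a)).card

/-- `|E(v,S)|`: number of edges from `v` to `S`. -/
def eV (G : SimpleGraph V) [DecidableRel G.Adj] (v : V) (S : Finset V) : ℕ :=
  (S.filter (G.Adj v)).card

/-- Volume `vol_G(S)`. -/
def vol (G : SimpleGraph V) [DecidableRel G.Adj] (S : Finset V) : ℕ :=
  ∑ v ∈ S, G.degree v

/-- Value of the cut `(C, V \ C)`. -/
def cutVal (G : SimpleGraph V) [DecidableRel G.Adj] (C : Finset V) : ℕ :=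
  eBtw G C Cᶜ

/-- `(C, V \ C)` is a minimum cut. -/
def IsMinCut (G : SimpleGraph V) [DecidableRel G.Adj] (C : Finset V) : Prop :=
  C.Nonempty ∧ Cᶜ.Nonempty ∧
    ∀ D : Finset V, D.Nonempty → Dᶜ.Nonempty → cutVal G C ≤ cutVal G D

/-- `|E(A,A)|`: number of edges with both endpoints in `A`. -/
def inEdges (G : SimpleGraph V) [DecidableRel G.Adj] (A : Finset V) : ℕ :=
  (G.edgeFinset.filter (fun e => ∀ v ∈ e, v ∈ A)).card

omit [Fintype V] [DecidableEq V] in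
lemma eBtw_comm (G : SimpleGraph V) [DecidableRel G.Adj] (A B : Finset V) :
    eBtw G A B = eBtw G B A := by
  simp only [eBtw, card_filter]
  rw [sum_comm]
  simp only [G.adj_comm]

omit [Fintype V] [DecidableEq V] in
lemma eBtw_mono (G : SimpleGraph V) [DecidableRel G.Adj] {A A' B B' : Finset V}
    (hA : A ⊆ A') (hB : B ⊆ B') : eBtw G A B ≤ eBtw G A' B' :=
  (sum_le_sum fun _ _ => card_le_card (filter_subset_filter _ hB)).trans
    (sum_le_sum_of_subset hA)

omit [Fintype V] in
lemma eBtw_eq_eBtw_self_add_eBtw_sdiff (G : SimpleGraph V) [DecidableRel G.Adj]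
    {S X : Finset V} (hS : S ⊆ X) : eBtw G S X = eBtw G S S + eBtw G S (X \ S) := by
  rw [eBtw, eBtw, eBtw, ← sum_add_distrib]
  refine sum_congr rfl fun a _ => ?_
  rw [← card_union_of_disjoint (disjoint_filter_filter disjoint_sdiff), ← filter_union,
    union_sdiff_of_subset hS]

omit [Fintype V] [DecidableEq V] in
lemma eBtw_self_le (G : SimpleGraph V) [DecidableRel G.Adj] (S : Finset V) :
    eBtw G S S ≤ #S * #S :=
  (sum_le_sum fun _ _ => card_filter_le _ _).trans_eq (by rw [sum_const, smul_eq_mul])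

omit [Fintype V] [DecidableEq V] in
lemma card_mul_le_eBtw (G : SimpleGraph V) [DecidableRel G.Adj] {S T : Finset V} {d : ℝ}
    (h : ∀ a ∈ S, d ≤ eV G a T) : #S * d ≤ eBtw G S T := by
  rw [eBtw, Nat.cast_sum, ← nsmul_eq_mul]
  exact card_nsmul_le_sum _ _ _ h

lemma eBtw_inter_sdiff_le_cutVal (G : SimpleGraph V) [DecidableRel G.Adj] (X C : Finset V) :
    eBtw G (X ∩ C) (X \ C) ≤ cutVal G C :=
  eBtw_mono G inter_subset_right fun _ hv => mem_compl.2 (mem_sdiff.1 hv).2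

lemma eBtw_sdiff_inter_le_cutVal (G : SimpleGraph V) [DecidableRel G.Adj] (X C : Finset V) :
    eBtw G (X \ C) (X ∩ C) ≤ cutVal G C := by
  rw [eBtw_comm]
  exact eBtw_inter_sdiff_le_cutVal G X C

/-- Every vertex of `S` sends at least `2δ/5` edges into `X`, of which at most `|S|²` stay inside
`S` and at most `λ` leave it, so `2δ|S|/5 ≤ |S|² + λ`; with `|S| ≤ λ/40` and `δ ≥ λ + 1` this
forces `|S| < 3`. -/
lemma card_le_two_of_eBtw_sdiff_le (G : SimpleGraph V) [DecidableRel G.Adj] {lam : ℕ}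
    (hlam : lam < G.minDegree) {S X : Finset V} (hS : S ⊆ X)
    (hX : ∀ v ∈ X, 2 * (G.degree v : ℝ) / 5 ≤ (eV G v X : ℝ))
    (hcut : eBtw G S (X \ S) ≤ lam) (hsmall : (#S : ℝ) ≤ lam / 40) :
    #S ≤ 2 := by
  have hδ : (lam : ℝ) + 1 ≤ G.minDegree := by exact_mod_cast hlam
  have hlower : #S * (2 * (G.minDegree : ℝ) / 5) ≤ eBtw G S X := by
    refine card_mul_le_eBtw G fun a ha => le_trans ?_ (hX a (hS ha))
    have : (G.minDegree : ℝ) ≤ G.degree a := by exact_mod_cast G.minDegree_le_degree a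
    linarith
  have hupper : (eBtw G S X : ℝ) ≤ #S * #S + lam := by
    rw [eBtw_eq_eBtw_self_add_eBtw_sdiff G hS]
    exact_mod_cast add_le_add (eBtw_self_le G S) hcut
  by_contra! h
  have h3 : (3 : ℝ) ≤ #S := by exact_mod_cast h
  nlinarith

theorem stmt1_general (G : SimpleGraph V) [DecidableRel G.Adj] (δ : ℕ)
    (hδ : δ = G.minDegree)
    (C : Finset V)
    (lam : ℕ) (hlam : lam = cutVal G C) (hlamδ : lam < δ)
    (X' : Finset V)
    (hX' : ∀ v ∈ X', 2 * (G.degree v : ℝ) / 5 ≤ (eV G v X' : ℝ))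
    (hsmall : (min ((X' ∩ C).card) ((X' \ C).card) : ℝ) ≤ (lam : ℝ) / 40) :
    min ((X' ∩ C).card) ((X' \ C).card) ≤ 2 := by
  subst hδ hlam
  rw [← Nat.cast_min] at hsmall
  rcases min_choice #(X' ∩ C) #(X' \ C) with hmin | hmin <;> rw [hmin] at hsmall ⊢
  · refine card_le_two_of_eBtw_sdiff_le G hlamδ inter_subset_left hX' ?_ hsmall
    rw [sdiff_inter_self_left]
    exact eBtw_inter_sdiff_le_cutVal G X' C
  · refine card_le_two_of_eBtw_sdiff_le G hlamδ sdiff_subset hX' ?_ hsmall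
    rw [sdiff_sdiff_self_left]
    exact eBtw_sdiff_inter_le_cutVal G X' C

theorem stmt1 (G : SimpleGraph V) [DecidableRel G.Adj] (δ : ℕ)
    (hδ : δ = G.minDegree)
    (C : Finset V) (hC : IsMinCut G C)
    (lam : ℕ) (hlam : lam = cutVal G C) (hlamδ : lam < δ)
    (X' : Finset V)
    (hX' : ∀ v ∈ X', 2 * (G.degree v : ℝ) / 5 ≤ (eV G v X' : ℝ))
    (hsmall : (min ((X' ∩ C).card) ((X' \ C).card) : ℝ) ≤ (lam : ℝ) / 40) :
    min ((X' ∩ C).card) ((X' \ C).card) ≤ 2 :=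
  stmt1_general G δ hδ C lam hlam hlamδ X' hX' hsmall
end

section
/- Let G be a simple graph and (C, V\C) a non-trivial minimum cut (i.e., |C| ≥ 2 and |V\C| ≥ 2). Let X' ⊆ V with min{|X'∩C|, |X'\C|} ≤ 2, and let X'' = {v ∈ X' : |E(v, X')| > deg(v)/2 + 1}. Then X'' ⊆ C or X'' ⊆ V\C (i.e., min{|X''∩C|, |X''\C|} = 0). -/
/-!
Moving a single vertex `v` across a minimum cut changes the cut value by `deg v - 2 |E(v, other side)|`,
so in a non-trivial minimum cut no vertex sends more than half of its edges to the other side. If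
`|X' ∩ C| ≤ 2`, a vertex `v ∈ X' ∩ C` has at most one neighbour in `X' ∩ C`, hence
`|E(v, X')| ≤ 1 + |E(v, V \ C)| ≤ 1 + deg v / 2`, and `v ∉ X''`. The case `|X' \ C| ≤ 2` is the same
argument for the complementary minimum cut.
-/

open Finset

variable {V : Type*} [Fintype V] [DecidableEq V]

section Neighbours

variable {α : Type*} (G : SimpleGraph α) [DecidableRel G.Adj]

lemma eV_mono {v : α} {S T : Finset α} (h : S ⊆ T) : eV G v S ≤ eV G v T :=
  card_le_card (filter_subset_filter _ h)

lemma eV_union_le [DecidableEq α] (v : α) (S T : Finset α) :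
    eV G v (S ∪ T) ≤ eV G v S + eV G v T := by
  rw [eV, filter_union]
  exact card_union_le _ _

lemma eV_erase_self [DecidableEq α] (v : α) (S : Finset α) : eV G v (S.erase v) = eV G v S := by
  rw [eV, eV, filter_erase, erase_eq_of_notMem]
  simp

lemma eV_le_card_erase [DecidableEq α] (v : α) (S : Finset α) : eV G v S ≤ (S.erase v).card := by
  rw [← eV_erase_self]
  exact card_filter_le _ _

lemma eV_insert_of_notMem [DecidableEq α] {u : α} {S : Finset α} (hu : u ∉ S) (a : α) :
    eV G a (insert u S) = eV G a S + if G.Adj a u then 1 else 0 := by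
  rw [eV, eV, filter_insert]
  split_ifs <;> simp [card_insert_of_notMem, hu]

lemma sum_ite_adj_eq_eV (u : α) (S : Finset α) :
    ∑ a ∈ S, (if G.Adj a u then 1 else 0) = eV G u S := by
  simp_rw [eV, card_filter, G.adj_comm]

end Neighbours

section Cuts

variable (G : SimpleGraph V) [DecidableRel G.Adj]

lemma degree_eq_eV_add_eV_compl (v : V) (S : Finset V) :
    G.degree v = eV G v S + eV G v Sᶜ := by
  rw [← G.card_neighborFinset_eq_degree, G.neighborFinset_eq_filter, eV, eV,
    ← card_union_of_disjoint (disjoint_filter_filter disjoint_compl_right), ← filter_union,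
    union_compl]

lemma cutVal_eq_sum_eV (C : Finset V) : cutVal G C = ∑ a ∈ C, eV G a Cᶜ := rfl

lemma cutVal_compl (C : Finset V) : cutVal G Cᶜ = cutVal G C := by
  simp only [cutVal_eq_sum_eV, compl_compl, eV, card_filter]
  rw [sum_comm]
  simp_rw [G.adj_comm]

lemma cutVal_erase_add {C : Finset V} {u : V} (hu : u ∈ C) :
    cutVal G (C.erase u) + 2 * eV G u Cᶜ = cutVal G C + G.degree u := by
  have hcompl : (C.erase u)ᶜ = insert u Cᶜ := by
    ext x
    simp only [mem_compl, mem_erase, mem_insert]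
    tauto
  have hC : cutVal G C = ∑ a ∈ C.erase u, eV G a Cᶜ + eV G u Cᶜ := by
    rw [cutVal_eq_sum_eV, ← add_sum_erase _ _ hu, add_comm]
  have hCu : cutVal G (C.erase u) = ∑ a ∈ C.erase u, eV G a Cᶜ + eV G u C := by
    rw [cutVal_eq_sum_eV, hcompl, sum_congr rfl fun a _ => eV_insert_of_notMem G (by simp [hu]) a,
      sum_add_distrib, sum_ite_adj_eq_eV, eV_erase_self]
  rw [hC, hCu, degree_eq_eV_add_eV_compl G u C]
  ring

variable {G}

lemma IsMinCut.compl {C : Finset V} (hC : IsMinCut G C) : IsMinCut G Cᶜ :=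
  ⟨hC.2.1, by rw [compl_compl]; exact hC.1, fun D hD hDc => cutVal_compl G C ▸ hC.2.2 D hD hDc⟩

lemma IsMinCut.two_mul_eV_compl_le_degree {C : Finset V} (hC : IsMinCut G C) (hC1 : 2 ≤ C.card)
    {u : V} (hu : u ∈ C) : 2 * eV G u Cᶜ ≤ G.degree u := by
  have hne : (C.erase u).Nonempty := by
    rw [← card_pos, card_erase_of_mem hu]
    omega
  have := hC.2.2 _ hne ⟨u, by simp⟩
  have := cutVal_erase_add G hu
  omega

lemma eV_le_eV_compl_add_one {C X : Finset V} (hX : (X ∩ C).card ≤ 2) {v : V}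
    (hv : v ∈ X ∩ C) : eV G v X ≤ eV G v Cᶜ + 1 :=
  calc eV G v X = eV G v (X \ C ∪ X ∩ C) := by rw [sdiff_union_inter]
    _ ≤ eV G v (X \ C) + eV G v (X ∩ C) := eV_union_le G v _ _
    _ ≤ eV G v Cᶜ + 1 := by
      gcongr
      · exact eV_mono G fun x hx => mem_compl.2 (mem_sdiff.1 hx).2
      · have := eV_le_card_erase G v (X ∩ C)
        rw [card_erase_of_mem hv] at this
        omega

lemma IsMinCut.filter_inter_eq_empty {C X : Finset V} (hC : IsMinCut G C) (hC1 : 2 ≤ C.card)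
    (hX : (X ∩ C).card ≤ 2) :
    X.filter (fun v => (G.degree v : ℝ) / 2 + 1 < (eV G v X : ℝ)) ∩ C = ∅ := by
  refine eq_empty_of_forall_notMem fun v hv => ?_
  obtain ⟨hvX, hvC⟩ := mem_inter.1 hv
  obtain ⟨hvX, hheavy⟩ := mem_filter.1 hvX
  have hle : (eV G v X : ℝ) ≤ eV G v Cᶜ + 1 := by
    exact_mod_cast eV_le_eV_compl_add_one hX (mem_inter.2 ⟨hvX, hvC⟩)
  have hdeg : 2 * (eV G v Cᶜ : ℝ) ≤ G.degree v := by
    exact_mod_cast hC.two_mul_eV_compl_le_degree hC1 hvC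
  linarith

end Cuts

theorem stmt2 (G : SimpleGraph V) [DecidableRel G.Adj]
    (C : Finset V) (hC : IsMinCut G C) (hC1 : 2 ≤ C.card) (hC2 : 2 ≤ Cᶜ.card)
    (X' : Finset V)
    (hsmall : min ((X' ∩ C).card) ((X' \ C).card) ≤ 2)
    (X'' : Finset V)
    (hX'' : X'' = X'.filter (fun v => (G.degree v : ℝ) / 2 + 1 < (eV G v X' : ℝ))) :
    min ((X'' ∩ C).card) ((X'' \ C).card) = 0 := by
  subst hX''
  rcases min_le_iff.1 hsmall with hsm | hsm
  · simp [hC.filter_inter_eq_empty hC1 hsm]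
  · rw [sdiff_eq_inter_compl] at hsm
    simp [sdiff_eq_inter_compl, hC.compl.filter_inter_eq_empty hC2 hsm]
end

section
/- Let G be a graph and X ⊆ V, and let X' = trim(X) be obtained by iteratively removing vertices v with |E(v, current set)| < 2deg(v)/5. Then the total number of edges incident to removed vertices that lie inside the current set at removal time (the 'trimmed edges') is at most 4·|E(X, V\X)|. -/
open Finset

variable {V : Type*} [Fintype V] [DecidableEq V]

/-!
Removing a vertex `v` from `S` changes the cut by `cut(S - v) = cut(S) - deg v + 2 |E(v,S)|`.
When `5 |E(v,S)| < 2 deg v` this gives `|E(v,S)| + 4 cut(S - v) ≤ 4 cut(S)`, and these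
inequalities telescope along the trimming sequence.
-/

lemma Finset.sum_range_add_le_of_add_le {M : Type*} [AddCommMonoid M] [PartialOrder M]
    [IsOrderedAddMonoid M] {a c : ℕ → M} {n : ℕ} (h : ∀ i < n, a i + c (i + 1) ≤ c i) :
    ∑ i ∈ range n, a i + c n ≤ c 0 := by
  induction n with
  | zero => simp
  | succ n ih =>
    calc ∑ i ∈ range (n + 1), a i + c (n + 1)
        = ∑ i ∈ range n, a i + (a n + c (n + 1)) := by rw [sum_range_succ, add_assoc]
      _ ≤ ∑ i ∈ range n, a i + c n := add_le_add_right (h n n.lt_succ_self) _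
      _ ≤ c 0 := ih fun i hi => h i (by omega)

namespace SimpleGraph

variable (G : SimpleGraph V) [DecidableRel G.Adj]

omit [DecidableEq V] in
lemma eV_univ (v : V) : eV G v univ = G.degree v := by
  simp [eV, degree, neighborFinset_eq_filter]

lemma eBtw_compl_add_sum_eV (S : Finset V) :
    eBtw G S Sᶜ + ∑ a ∈ S, eV G a S = vol G S := by
  rw [eBtw, vol, ← sum_add_distrib]
  refine sum_congr rfl fun a _ => ?_
  rw [← eV_univ, eV, eV, ← card_union_of_disjoint (disjoint_filter_filter disjoint_compl_left),
    ← filter_union, union_comm, union_compl]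

variable {G}

omit [Fintype V] in
lemma eV_erase_self {S : Finset V} {v : V} : eV G v (S.erase v) = eV G v S := by
  rw [eV, eV, filter_erase, erase_eq_of_notMem (by simp)]

omit [Fintype V] in
lemma eV_eq_eV_erase_add {S : Finset V} {v : V} (hv : v ∈ S) (a : V) :
    eV G a S = eV G a (S.erase v) + if G.Adj a v then 1 else 0 := by
  conv_lhs => rw [eV, ← insert_erase hv, filter_insert]
  split_ifs
  · rw [card_insert_of_notMem (by simp), eV]
  · rfl

omit [Fintype V] in
lemma sum_eV_eq_sum_eV_erase_add {S : Finset V} {v : V} (hv : v ∈ S) :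
    ∑ a ∈ S, eV G a S = ∑ a ∈ S.erase v, eV G a (S.erase v) + 2 * eV G v S := by
  have hcol : ∑ a ∈ S, (if G.Adj a v then 1 else 0) = eV G v S := by
    simp only [sum_boole, Nat.cast_id, eV, G.adj_comm]
  rw [sum_congr rfl fun a _ => eV_eq_eV_erase_add hv a, sum_add_distrib, hcol,
    ← add_sum_erase _ _ hv, eV_erase_self]
  ring

lemma eBtw_compl_erase_add_degree {S : Finset V} {v : V} (hv : v ∈ S) :
    eBtw G (S.erase v) (S.erase v)ᶜ + G.degree v = eBtw G S Sᶜ + 2 * eV G v S := by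
  have hS := eBtw_compl_add_sum_eV G S
  have hSv := eBtw_compl_add_sum_eV G (S.erase v)
  have hvol : vol G S = vol G (S.erase v) + G.degree v := by
    rw [vol, vol, ← add_sum_erase _ _ hv, add_comm]
  have := sum_eV_eq_sum_eV_erase_add (G := G) hv
  omega

lemma eV_add_four_mul_eBtw_compl_erase_le {S : Finset V} {v : V} (hv : v ∈ S)
    (hsparse : 5 * eV G v S < 2 * G.degree v) :
    eV G v S + 4 * eBtw G (S.erase v) (S.erase v)ᶜ ≤ 4 * eBtw G S Sᶜ := by
  have := eBtw_compl_erase_add_degree (G := G) hv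
  omega

end SimpleGraph

theorem stmt5_general (G : SimpleGraph V) [DecidableRel G.Adj]
    (X : Finset V) (n : ℕ) (f : ℕ → Finset V) (v : ℕ → V)
    (hf0 : f 0 = X)
    (hstep : ∀ i < n, v i ∈ f i ∧ ((eV G (v i) (f i) : ℝ) < 2 * (G.degree (v i) : ℝ) / 5) ∧
      f (i + 1) = f i \ {v i}) :
    ∑ i ∈ Finset.range n, eV G (v i) (f i) ≤ 4 * eBtw G X Xᶜ := by
  have hdrop : ∀ i < n, eV G (v i) (f i) + 4 * eBtw G (f (i + 1)) (f (i + 1))ᶜ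
      ≤ 4 * eBtw G (f i) (f i)ᶜ := by
    intro i hi
    obtain ⟨hv, hsparse, hnext⟩ := hstep i hi
    rw [hnext, sdiff_singleton_eq_erase]
    refine G.eV_add_four_mul_eBtw_compl_erase_le hv ?_
    exact_mod_cast (by linarith : (5 * eV G (v i) (f i) : ℝ) < 2 * G.degree (v i))
  have := sum_range_add_le_of_add_le (c := fun i => 4 * eBtw G (f i) (f i)ᶜ) hdrop
  rw [hf0] at this
  omega

theorem stmt5 (G : SimpleGraph V) [DecidableRel G.Adj]
    (X : Finset V) (n : ℕ) (f : ℕ → Finset V) (v : ℕ → V)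
    (hf0 : f 0 = X)
    (hstep : ∀ i < n, v i ∈ f i ∧ ((eV G (v i) (f i) : ℝ) < 2 * (G.degree (v i) : ℝ) / 5) ∧
      f (i + 1) = f i \ {v i})
    (hfinal : ∀ w ∈ f n, ¬ ((eV G w (f n) : ℝ) < 2 * (G.degree w : ℝ) / 5)) :
    ∑ i ∈ Finset.range n, eV G (v i) (f i) ≤ 4 * eBtw G X Xᶜ :=
  stmt5_general G X n f v hf0 hstep
end
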